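/- arXiv:2412.17914 — 6 statements merged into one kernel-verified Lean document; each statement's English description precedes it below -/
import Mathlib

section
/- If g is a non-abelian finite-dimensional complex Lie algebra, the 2-cocycle c((m,g),(m',g')) = (0,[m,m']) on g⋊g with adjoint values is not a coboundary; in particular H^2(g⋊g, g⋊g) ≠ 0. -/
/-- The bracket of the semi-direct product Lie algebra `g ⋊ g`. -/
def semidirectBracket {g : Type*} [LieRing g] [LieAlgebra ℂ g]
    (x y : g × g) : g × g :=
  (⁅x.2, y.1⁆ - ⁅y.2, x.1⁆, ⁅x.2, y.2⁆)

/-- The 2-cocycle `c((m,g),(m',g')) = (0, [m,m'])`. -/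
def cocycleC {g : Type*} [LieRing g] [LieAlgebra ℂ g] (x y : g × g) : g × g :=
  (0, ⁅x.1, y.1⁆)

/-!
The ideal `g × 0` of `g ⋊ g` is abelian, and bracketing with it lands back in it. Hence every
coboundary `[x, α y] - [y, α x] - α [x, y]` has zero `g`-component on pairs `x, y ∈ g × 0`,
whereas `c((a,0),(b,0)) = (0, [a,b])` does not once `[a,b] ≠ 0`.
-/

section

variable {g : Type*} [LieRing g] [LieAlgebra ℂ g]

lemma semidirectBracket_inl_inl (a b : g) : semidirectBracket ((a, 0) : g × g) (b, 0) = 0 := by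
  simp [semidirectBracket]

lemma semidirectBracket_inl_snd (a : g) (y : g × g) : (semidirectBracket (a, 0) y).2 = 0 := by
  simp [semidirectBracket]

lemma coboundary_inl_inl_snd (α : (g × g) →ₗ[ℂ] (g × g)) (a b : g) :
    (semidirectBracket (a, 0) (α (b, 0)) - semidirectBracket (b, 0) (α (a, 0)) -
      α (semidirectBracket (a, 0) (b, 0))).2 = 0 := by
  simp only [Prod.snd_sub, semidirectBracket_inl_snd, semidirectBracket_inl_inl, map_zero,
    sub_zero]

end

theorem cocycleC_not_coboundary_general {g : Type*} [LieRing g] [LieAlgebra ℂ g]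
    (hna : ∃ a b : g, ⁅a, b⁆ ≠ 0) :
    ¬ ∃ α : (g × g) →ₗ[ℂ] (g × g), ∀ x y : g × g,
      cocycleC x y =
        semidirectBracket x (α y) - semidirectBracket y (α x) - α (semidirectBracket x y) := by
  rintro ⟨α, hα⟩
  obtain ⟨a, b, hab⟩ := hna
  exact hab ((congrArg Prod.snd (hα (a, 0) (b, 0))).trans (coboundary_inl_inl_snd α a b))

/-- for non-abelian `g`, the cocycle `c` is not a coboundary;
in particular `H²(g ⋊ g, g ⋊ g) ≠ 0`. -/
theorem cocycleC_not_coboundary {g : Type*} [LieRing g] [LieAlgebra ℂ g]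
    [FiniteDimensional ℂ g] (hna : ∃ a b : g, ⁅a, b⁆ ≠ 0) :
    ¬ ∃ α : (g × g) →ₗ[ℂ] (g × g), ∀ x y : g × g,
      cocycleC x y =
        semidirectBracket x (α y) - semidirectBracket y (α x) - α (semidirectBracket x y) :=
  cocycleC_not_coboundary_general hna
end

section
/- A linear map D on the direct product Lie algebra g⊕g, written in block matrix form D = (D1 D2; D3 D4), is a derivation if and only if D1 and D4 are derivations of g and D2, D3 are linear maps g→g that vanish on [g,g] and take values in the center Z(g). -/
/-!
Writing `D (x, x') = (A x + B x', C x + E x')`, the first component of the Leibniz rule for `D`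
reads `A ⁅x, y⁆ + B ⁅x', y'⁆ = ⁅A x + B x', y⁆ + ⁅x, A y + B y'⁆`. Specialising two of the four
variables to `0` shows that `A` is a derivation, that `B` kills brackets and that `B` has
central image; conversely these three facts give back the identity term by term. The second
component is the same identity with the two factors of `g ⊕ g` exchanged.
-/

def directBracket {g : Type*} [LieRing g] [LieAlgebra ℂ g] (x y : g × g) : g × g :=
  (⁅x.1, y.1⁆, ⁅x.2, y.2⁆)

/-- A linear map on `g ⊕ g` given in block matrix form `(D1 D2; D3 D4)`. -/
def blockMap {g : Type*} [LieRing g] [LieAlgebra ℂ g]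
    (D1 D2 D3 D4 : g →ₗ[ℂ] g) (p : g × g) : g × g :=
  (D1 p.1 + D2 p.2, D3 p.1 + D4 p.2)

theorem leibniz_row_iff {L : Type*} [LieRing L] (A B : L →+ L) :
    (∀ x x' y y' : L, A ⁅x, y⁆ + B ⁅x', y'⁆ = ⁅A x + B x', y⁆ + ⁅x, A y + B y'⁆) ↔
      (∀ x y : L, A ⁅x, y⁆ = ⁅A x, y⁆ + ⁅x, A y⁆) ∧ (∀ x y : L, B ⁅x, y⁆ = 0) ∧
        (∀ x z : L, ⁅x, B z⁆ = 0) := by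
  constructor
  · intro h
    refine ⟨fun x y => ?_, fun x' y' => ?_, fun x z => ?_⟩
    · simpa using h x 0 y 0
    · simpa using h 0 x' 0 y'
    · simpa using (h x 0 0 z).symm
  · rintro ⟨hA, hB, hBcentral⟩ x x' y y'
    have hB_lie : ⁅B x', y⁆ = 0 := by rw [← lie_skew, hBcentral, neg_zero]
    rw [add_lie, lie_add, hA, hB, hB_lie, hBcentral]
    abel

theorem derivation_direct_product_iff_general {g : Type*} [LieRing g] [LieAlgebra ℂ g]
    (D1 D2 D3 D4 : g →ₗ[ℂ] g) :
    (∀ x y : g × g,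
        blockMap D1 D2 D3 D4 (directBracket x y) =
          directBracket (blockMap D1 D2 D3 D4 x) y +
            directBracket x (blockMap D1 D2 D3 D4 y)) ↔
      ((∀ x y : g, D1 ⁅x, y⁆ = ⁅D1 x, y⁆ + ⁅x, D1 y⁆) ∧
        (∀ x y : g, D4 ⁅x, y⁆ = ⁅D4 x, y⁆ + ⁅x, D4 y⁆) ∧
        (∀ x y : g, D2 ⁅x, y⁆ = 0) ∧ (∀ x z : g, ⁅x, D2 z⁆ = 0) ∧
        (∀ x y : g, D3 ⁅x, y⁆ = 0) ∧ (∀ x z : g, ⁅x, D3 z⁆ = 0)) := by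
  have row₁ := leibniz_row_iff D1.toAddMonoidHom D2.toAddMonoidHom
  have row₂ := leibniz_row_iff D4.toAddMonoidHom D3.toAddMonoidHom
  have swap_row₂ : (∀ x x' y y' : g, D3 ⁅x, y⁆ + D4 ⁅x', y'⁆ = ⁅D3 x + D4 x', y'⁆ +
      ⁅x', D3 y + D4 y'⁆) ↔
      ∀ x' x y' y : g, D4 ⁅x', y'⁆ + D3 ⁅x, y⁆ = ⁅D4 x' + D3 x, y'⁆ + ⁅x', D4 y' + D3 y⁆ := by
    simp only [add_comm (D3 _)]
    exact ⟨fun h x' x y' y => h x x' y y', fun h x x' y y' => h x' x y' y⟩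
  simp only [LinearMap.toAddMonoidHom_coe] at row₁ row₂
  simp only [Prod.forall, Prod.ext_iff, blockMap, directBracket, Prod.fst_add, Prod.snd_add,
    forall_and, row₁, swap_row₂, row₂]
  tauto

/-- `(D1 D2; D3 D4)` is a derivation of the direct product Lie
algebra `g ⊕ g` iff `D1, D4` are derivations of `g` and `D2, D3` vanish on
`[g,g]` and take values in the center `Z(g)`. -/
theorem derivation_direct_product_iff {g : Type*} [LieRing g] [LieAlgebra ℂ g]
    [FiniteDimensional ℂ g] (D1 D2 D3 D4 : g →ₗ[ℂ] g) :
    (∀ x y : g × g,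
        blockMap D1 D2 D3 D4 (directBracket x y) =
          directBracket (blockMap D1 D2 D3 D4 x) y +
            directBracket x (blockMap D1 D2 D3 D4 y)) ↔
      ((∀ x y : g, D1 ⁅x, y⁆ = ⁅D1 x, y⁆ + ⁅x, D1 y⁆) ∧
        (∀ x y : g, D4 ⁅x, y⁆ = ⁅D4 x, y⁆ + ⁅x, D4 y⁆) ∧
        (∀ x y : g, D2 ⁅x, y⁆ = 0) ∧ (∀ x z : g, ⁅x, D2 z⁆ = 0) ∧
        (∀ x y : g, D3 ⁅x, y⁆ = 0) ∧ (∀ x z : g, ⁅x, D3 z⁆ = 0)) :=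
  derivation_direct_product_iff_general D1 D2 D3 D4
end

section
/- A linear map D on the semi-direct product Lie algebra g⋊g, written in block form D = (D1 D2; D3 D4), is a derivation if and only if: D2 and D4 are derivations of g, D3 vanishes on [g,g] and takes values in Z(g), and D1([x,y]) = [D4(x),y] + [x,D1(y)] for all x,y in g. -/
theorem lie_map_eq_zero_of_map_lie_of_symm {L F : Type*} [LieRing L] [IsAddTorsionFree L]
    [FunLike F L L] [AddMonoidHomClass F L L] (D : F)
    (hD : ∀ x y : L, D ⁅x, y⁆ = ⁅D x, y⁆) (hsymm : ∀ x y : L, ⁅D x, y⁆ = ⁅D y, x⁆) (x y : L) :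
    ⁅D x, y⁆ = 0 := by
  have h : D ⁅x, y⁆ = -D ⁅x, y⁆ := calc
    D ⁅x, y⁆ = D ⁅y, x⁆ := by rw [hD, hD, hsymm]
    _ = -D ⁅x, y⁆ := by rw [← lie_skew, map_neg]
  rw [← hD, self_eq_neg.mp h]

section BlockMap

variable {g : Type*} [LieRing g] [LieAlgebra ℂ g] {D1 D2 D3 D4 : g →ₗ[ℂ] g}

def BlockMapLeibnizAt (D1 D2 D3 D4 : g →ₗ[ℂ] g) (p q : g × g) : Prop :=
  blockMap D1 D2 D3 D4 (semidirectBracket p q) =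
    semidirectBracket (blockMap D1 D2 D3 D4 p) q + semidirectBracket p (blockMap D1 D2 D3 D4 q)

theorem BlockMapLeibnizAt.inl_inl {x y : g} (h : BlockMapLeibnizAt D1 D2 D3 D4 (x, 0) (y, 0)) :
    ⁅D3 x, y⁆ = ⁅D3 y, x⁆ := by
  simp only [BlockMapLeibnizAt, blockMap, semidirectBracket, Prod.ext_iff, Prod.fst_add,
    zero_lie, lie_zero, sub_zero, zero_sub, map_zero, add_zero] at h
  exact add_neg_eq_zero.mp h.1.symm

theorem BlockMapLeibnizAt.inl_inr {x y : g} (h : BlockMapLeibnizAt D1 D2 D3 D4 (x, 0) (0, y)) :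
    D1 ⁅y, x⁆ = ⁅D4 y, x⁆ + ⁅y, D1 x⁆ ∧ D3 ⁅x, y⁆ = ⁅D3 x, y⁆ := by
  simp only [BlockMapLeibnizAt, blockMap, semidirectBracket, Prod.ext_iff, Prod.fst_add,
    Prod.snd_add, zero_lie, lie_zero, zero_sub, map_zero, add_zero, zero_add, map_neg] at h
  obtain ⟨h1, h3⟩ := h
  refine ⟨by linear_combination (norm := module) -h1, ?_⟩
  rwa [← lie_skew, map_neg]

theorem BlockMapLeibnizAt.inr_inr {x y : g} (h : BlockMapLeibnizAt D1 D2 D3 D4 (0, x) (0, y)) :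
    D2 ⁅x, y⁆ = ⁅D2 x, y⁆ + ⁅x, D2 y⁆ ∧ D4 ⁅x, y⁆ = ⁅D4 x, y⁆ + ⁅x, D4 y⁆ := by
  simp only [BlockMapLeibnizAt, blockMap, semidirectBracket, Prod.ext_iff, Prod.fst_add,
    Prod.snd_add, lie_zero, sub_zero, zero_sub, lie_skew, map_zero, zero_add] at h
  exact h

theorem blockMapLeibnizAt_of_blocks
    (h2 : ∀ x y : g, D2 ⁅x, y⁆ = ⁅D2 x, y⁆ + ⁅x, D2 y⁆)
    (h4 : ∀ x y : g, D4 ⁅x, y⁆ = ⁅D4 x, y⁆ + ⁅x, D4 y⁆)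
    (h3 : ∀ x y : g, D3 ⁅x, y⁆ = 0) (hz : ∀ x z : g, ⁅x, D3 z⁆ = 0)
    (h1 : ∀ x y : g, D1 ⁅x, y⁆ = ⁅D4 x, y⁆ + ⁅x, D1 y⁆) (p q : g × g) :
    BlockMapLeibnizAt D1 D2 D3 D4 p q := by
  obtain ⟨m, a⟩ := p
  obtain ⟨n, b⟩ := q
  have hz' : ∀ x z : g, ⁅D3 z, x⁆ = 0 := fun x z => by rw [← lie_skew, hz, neg_zero]
  simp only [BlockMapLeibnizAt, blockMap, semidirectBracket, Prod.ext_iff, Prod.fst_add,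
    Prod.snd_add, map_sub, add_lie, lie_add, h1, h2, h3, h4, hz, hz', ← lie_skew b (D2 a)]
  constructor <;> abel

end BlockMap

theorem derivation_semidirect_product_iff_general {g : Type*} [LieRing g] [LieAlgebra ℂ g]
    (D1 D2 D3 D4 : g →ₗ[ℂ] g) :
    (∀ x y : g × g,
        blockMap D1 D2 D3 D4 (semidirectBracket x y) =
          semidirectBracket (blockMap D1 D2 D3 D4 x) y +
            semidirectBracket x (blockMap D1 D2 D3 D4 y)) ↔
      ((∀ x y : g, D2 ⁅x, y⁆ = ⁅D2 x, y⁆ + ⁅x, D2 y⁆) ∧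
        (∀ x y : g, D4 ⁅x, y⁆ = ⁅D4 x, y⁆ + ⁅x, D4 y⁆) ∧
        (∀ x y : g, D3 ⁅x, y⁆ = 0) ∧ (∀ x z : g, ⁅x, D3 z⁆ = 0) ∧
        (∀ x y : g, D1 ⁅x, y⁆ = ⁅D4 x, y⁆ + ⁅x, D1 y⁆)) := by
  refine ⟨fun h => ?_, fun ⟨h2, h4, h3, hz, h1⟩ => blockMapLeibnizAt_of_blocks h2 h4 h3 hz h1⟩
  have : IsAddTorsionFree g := .of_isTorsionFree ℂ g
  have hD3 : ∀ x y : g, D3 ⁅x, y⁆ = ⁅D3 x, y⁆ := fun x y =>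
    (BlockMapLeibnizAt.inl_inr (h (x, 0) (0, y))).2
  have hD3_central : ∀ x y : g, ⁅D3 x, y⁆ = 0 :=
    lie_map_eq_zero_of_map_lie_of_symm D3 hD3 fun x y => BlockMapLeibnizAt.inl_inl (h (x, 0) (y, 0))
  exact ⟨fun x y => (BlockMapLeibnizAt.inr_inr (h (0, x) (0, y))).1,
    fun x y => (BlockMapLeibnizAt.inr_inr (h (0, x) (0, y))).2,
    fun x y => (hD3 x y).trans (hD3_central x y),
    fun x z => by rw [← lie_skew, hD3_central, neg_zero],
    fun x y => (BlockMapLeibnizAt.inl_inr (h (y, 0) (0, x))).1⟩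

/-- `(D1 D2; D3 D4)` is a derivation of the semi-direct product
Lie algebra `g ⋊ g` iff `D2, D4` are derivations of `g`, `D3` vanishes on
`[g,g]` with values in `Z(g)`, and `D1[x,y] = [D4 x, y] + [x, D1 y]`. -/
theorem derivation_semidirect_product_iff {g : Type*} [LieRing g] [LieAlgebra ℂ g]
    [FiniteDimensional ℂ g] (D1 D2 D3 D4 : g →ₗ[ℂ] g) :
    (∀ x y : g × g,
        blockMap D1 D2 D3 D4 (semidirectBracket x y) =
          semidirectBracket (blockMap D1 D2 D3 D4 x) y +
            semidirectBracket x (blockMap D1 D2 D3 D4 y)) ↔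
      ((∀ x y : g, D2 ⁅x, y⁆ = ⁅D2 x, y⁆ + ⁅x, D2 y⁆) ∧
        (∀ x y : g, D4 ⁅x, y⁆ = ⁅D4 x, y⁆ + ⁅x, D4 y⁆) ∧
        (∀ x y : g, D3 ⁅x, y⁆ = 0) ∧ (∀ x z : g, ⁅x, D3 z⁆ = 0) ∧
        (∀ x y : g, D1 ⁅x, y⁆ = ⁅D4 x, y⁆ + ⁅x, D1 y⁆)) :=
  derivation_semidirect_product_iff_general D1 D2 D3 D4
end

section
/- If g is a 2-step nilpotent Lie algebra, then the center of the deformed Lie algebra g ×^ad_t Der(g) is zero; consequently g ×^ad_t Der(g) is not isomorphic to the direct product Lie algebra g ⊕ Der(g) when g is nonzero. -/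
/-- The deformed bracket of the crossed module `ad : g → Der(g)`. -/
noncomputable def adDeformedBracket {g : Type*} [LieRing g] [LieAlgebra ℂ g] (t : ℂ)
    (p q : g × LieDerivation ℂ g g) : g × LieDerivation ℂ g g :=
  (p.2 q.1 - q.2 p.1, ⁅p.2, q.2⁆ + t • LieDerivation.ad ℂ g ⁅p.1, q.1⁆)

/-- The direct product bracket on `g ⊕ Der(g)`. -/
def adDirectBracket {g : Type*} [LieRing g] [LieAlgebra ℂ g]
    (p q : g × LieDerivation ℂ g g) : g × LieDerivation ℂ g g :=
  (⁅p.1, q.1⁆, ⁅p.2, q.2⁆)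

/-!
The bracket with `(h', 0)` shows that a central element `(h, D)` of the deformed algebra has
`D = 0`, and the bracket with `(0, D₀)` then gives `D₀ h = 0`. So the center vanishes as soon as
`g` has an injective derivation. For a 2-step nilpotent `g` one is obtained from a splitting
`g = V ⊕ [g, g]`: the grading derivation acting by `1` on `V` and by `2` on `[g, g]`.
On the other hand a nonzero nilpotent Lie algebra has nonzero center `Z(g)`, and `Z(g) × 0` is
central in the direct product, so no bracket-preserving linear isomorphism can exist.
-/

open LieModule

section Nilpotent

variable {R L : Type*} [CommRing R] [LieRing L] [LieAlgebra R L]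

theorem commutator_le_center_of_lie_lie_eq_zero (h : ∀ x y z : L, ⁅⁅x, y⁆, z⁆ = 0) :
    ⁅(⊤ : LieIdeal R L), ⊤⁆ ≤ LieAlgebra.center R L := by
  rw [LieSubmodule.lie_le_iff]
  intro x _ y _
  rw [mem_maxTrivSubmodule]
  intro z
  rw [← lie_skew, h, neg_zero]

theorem lie_eq_zero_of_mem_commutator (h : ⁅(⊤ : LieIdeal R L), ⊤⁆ ≤ LieAlgebra.center R L)
    (x : L) {c : L} (hc : c ∈ (⁅(⊤ : LieIdeal R L), ⊤⁆ : LieIdeal R L)) : ⁅x, c⁆ = 0 :=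
  (mem_maxTrivSubmodule R L L c).1 (h hc) x

theorem isNilpotent_of_commutator_le_center
    (h : ⁅(⊤ : LieIdeal R L), ⊤⁆ ≤ LieAlgebra.center R L) : IsNilpotent L L := by
  refine LieModule.IsNilpotent.mk (R := R) (M := L) (k := 2) ?_
  rw [lowerCentralSeries_succ, lowerCentralSeries_succ, lowerCentralSeries_zero,
    LieSubmodule.lie_eq_bot_iff]
  exact fun x _ _ hm ↦ lie_eq_zero_of_mem_commutator h x hm

end Nilpotent

section GradingDerivation

variable {K L : Type*} [Field K] [LieRing L] [LieAlgebra K L]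
  {V : Submodule K L} (hV : IsCompl (⁅(⊤ : LieIdeal K L), ⊤⁆ : LieIdeal K L).toSubmodule V)

theorem projection_lie (a b : L) : Submodule.projection _ V hV ⁅a, b⁆ = ⁅a, b⁆ :=
  Submodule.projection_apply_of_mem_left hV
    (LieSubmodule.lie_mem_lie (LieSubmodule.mem_top a) (LieSubmodule.mem_top b))

noncomputable def gradingDerivation (h : ⁅(⊤ : LieIdeal K L), ⊤⁆ ≤ LieAlgebra.center K L) :
    LieDerivation K L L where
  toLinearMap := LinearMap.id + Submodule.projection _ V hV
  leibniz' a b := by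
    have hπ (x y : L) : ⁅x, Submodule.projection _ V hV y⁆ = 0 :=
      lie_eq_zero_of_mem_commutator h x (Submodule.projection_apply_mem hV y)
    simp only [LinearMap.add_apply, LinearMap.id_apply, lie_add, projection_lie, hπ, add_zero]
    rw [← lie_skew b a, sub_neg_eq_add]

theorem gradingDerivation_apply (h : ⁅(⊤ : LieIdeal K L), ⊤⁆ ≤ LieAlgebra.center K L) (x : L) :
    gradingDerivation hV h x = x + Submodule.projection _ V hV x :=
  rfl

theorem gradingDerivation_injective [NeZero (2 : K)]
    (h : ⁅(⊤ : LieIdeal K L), ⊤⁆ ≤ LieAlgebra.center K L) :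
    Function.Injective (gradingDerivation hV h) := by
  rw [injective_iff_map_eq_zero]
  intro x hx
  rw [gradingDerivation_apply, add_eq_zero_iff_eq_neg] at hx
  have hxC : x ∈ (⁅(⊤ : LieIdeal K L), ⊤⁆ : LieIdeal K L).toSubmodule :=
    hx ▸ neg_mem (Submodule.projection_apply_mem hV x)
  have hx2 : (2 : K) • x = 0 := by
    rw [two_smul]
    nth_rewrite 2 [hx]
    rw [Submodule.projection_apply_of_mem_left hV hxC, add_neg_cancel]
  exact (smul_eq_zero.1 hx2).resolve_left two_ne_zero

end GradingDerivation

theorem exists_injective_lieDerivation_of_commutator_le_center {K L : Type*} [Field K]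
    [NeZero (2 : K)] [LieRing L] [LieAlgebra K L]
    (h : ⁅(⊤ : LieIdeal K L), ⊤⁆ ≤ LieAlgebra.center K L) :
    ∃ D : LieDerivation K L L, Function.Injective D :=
  let ⟨_, hV⟩ := Submodule.exists_isCompl (⁅(⊤ : LieIdeal K L), ⊤⁆ : LieIdeal K L).toSubmodule
  ⟨gradingDerivation hV h, gradingDerivation_injective hV h⟩

section Deformed

variable {g : Type*} [LieRing g] [LieAlgebra ℂ g]

theorem eq_zero_of_forall_adDeformedBracket_eq_zero {D₀ : LieDerivation ℂ g g}
    (hD₀ : Function.Injective D₀) (t : ℂ) {p : g × LieDerivation ℂ g g}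
    (hp : ∀ q, adDeformedBracket t p q = 0) : p = 0 := by
  obtain ⟨x, D⟩ := p
  have hD : D = 0 := by
    ext y
    simpa [adDeformedBracket] using congrArg Prod.fst (hp (y, 0))
  have hx : x = 0 := by
    refine hD₀ ?_
    simpa [adDeformedBracket, hD] using congrArg Prod.fst (hp (0, D₀))
  rw [hx, hD, Prod.mk_zero_zero]

theorem adDirectBracket_eq_zero_of_mem_center {z : g} (hz : z ∈ LieAlgebra.center ℂ g)
    (q : g × LieDerivation ℂ g g) : adDirectBracket (z, 0) q = 0 := by
  have hzq : ⁅z, q.1⁆ = 0 := by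
    rw [← lie_skew, (mem_maxTrivSubmodule ℂ g g z).1 hz, neg_zero]
  simp [adDirectBracket, hzq]

end Deformed

theorem forall_apply_symm_eq_zero_of_intertwining {R M N : Type*} [Semiring R]
    [AddCommMonoid M] [AddCommMonoid N] [Module R M] [Module R N]
    {β : M → M → M} {β' : N → N → N} (e : M ≃ₗ[R] N)
    (he : ∀ p q, e (β p q) = β' (e p) (e q)) {z : N} (hz : ∀ q, β' z q = 0) (q : M) :
    β (e.symm z) q = 0 :=
  e.injective (by rw [he, e.apply_symm_apply, hz, map_zero])

theorem two_step_nilpotent_deformed_center_zero_general {g : Type*} [LieRing g]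
    [LieAlgebra ℂ g] [Nontrivial g]
    (h2 : ∀ x y z : g, ⁅⁅x, y⁆, z⁆ = 0) (t : ℂ) :
    (∀ p : g × LieDerivation ℂ g g,
        (∀ q : g × LieDerivation ℂ g g, adDeformedBracket t p q = 0) → p = 0) ∧
    ¬ ∃ e : (g × LieDerivation ℂ g g) ≃ₗ[ℂ] (g × LieDerivation ℂ g g),
        ∀ p q : g × LieDerivation ℂ g g,
          e (adDeformedBracket t p q) = adDirectBracket (e p) (e q) := by
  have h := commutator_le_center_of_lie_lie_eq_zero (R := ℂ) h2
  obtain ⟨D₀, hD₀⟩ := exists_injective_lieDerivation_of_commutator_le_center h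
  have center_eq_zero := fun p => eq_zero_of_forall_adDeformedBracket_eq_zero (p := p) hD₀ t
  refine ⟨center_eq_zero, ?_⟩
  rintro ⟨e, he⟩
  have := isNilpotent_of_commutator_le_center h
  have := nontrivial_max_triv_of_isNilpotent ℂ g g
  obtain ⟨⟨z, hz⟩, hz0⟩ := exists_ne (0 : LieAlgebra.center ℂ g)
  have hzero : e.symm (z, 0) = 0 := center_eq_zero _
    (forall_apply_symm_eq_zero_of_intertwining e he (adDirectBracket_eq_zero_of_mem_center hz))
  have hz' : ((z, 0) : g × LieDerivation ℂ g g) = 0 := by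
    rw [← e.apply_symm_apply (z, 0), hzero, map_zero]
  exact hz0 (Subtype.ext (congrArg Prod.fst hz'))

/-- for a nonzero 2-step nilpotent Lie algebra `g`, the center of
the deformed Lie algebra `g ×^ad_t Der(g)` is zero; consequently the deformed Lie
algebra is not isomorphic to the direct product `g ⊕ Der(g)`. -/
theorem two_step_nilpotent_deformed_center_zero {g : Type*} [LieRing g]
    [LieAlgebra ℂ g] [FiniteDimensional ℂ g] [Nontrivial g]
    (h2 : ∀ x y z : g, ⁅⁅x, y⁆, z⁆ = 0) (t : ℂ) (ht : t ≠ 0) :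
    (∀ p : g × LieDerivation ℂ g g,
        (∀ q : g × LieDerivation ℂ g g, adDeformedBracket t p q = 0) → p = 0) ∧
    ¬ ∃ e : (g × LieDerivation ℂ g g) ≃ₗ[ℂ] (g × LieDerivation ℂ g g),
        ∀ p q : g × LieDerivation ℂ g g,
          e (adDeformedBracket t p q) = adDirectBracket (e p) (e q) :=
  two_step_nilpotent_deformed_center_zero_general h2 t
end

section
/- For a crossed module μ: h → g, the derived ideal of the deformed Lie algebra h ×^μ_t g (t ≠ 0) equals O ⊕ [g,g], where O is the subspace of h spanned by {g·h : g ∈ g, h ∈ h}. -/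
/-!
Because `μ` is a morphism of Lie algebras, `μ [a, b] = [μ a, μ b]` already lies in `[g, g]`, so
every deformed bracket lies in `O × [g, g]`. Conversely, the deformed brackets
`[(0, x), (b, 0)]_t = (x·b, 0)` and `[(0, x), (0, y)]_t = (0, [x, y])` do not see `t` and span
`O × 0` and `0 × [g, g]`.
-/

section

variable {h g : Type*} [LieRing h] [LieAlgebra ℂ h] [LieRing g] [LieAlgebra ℂ g]
  [LieRingModule g h] [LieModule ℂ g h]

/-- The deformed bracket `[(h,g),(h',g')]_t = (g·h' - g'·h, [g,g'] + t μ[h,h'])`. -/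
def deformedBracket (μ : h →ₗ⁅ℂ⁆ g) (t : ℂ) (x y : h × g) : h × g :=
  (⁅x.2, y.1⁆ - ⁅y.2, x.1⁆, ⁅x.2, y.2⁆ + t • μ ⁅x.1, y.1⁆)

end

open Submodule LinearMap

section

variable {h g : Type*} [LieRing h] [LieAlgebra ℂ h] [LieRing g] [LieAlgebra ℂ g]
  [LieRingModule g h]

theorem deformedBracket_mem_prod_span (μ : h →ₗ⁅ℂ⁆ g) (t : ℂ) (x y : h × g) :
    deformedBracket μ t x y ∈ (span ℂ {a : h | ∃ (x : g) (b : h), a = ⁅x, b⁆}).prod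
      (span ℂ {c : g | ∃ x y : g, c = ⁅x, y⁆}) :=
  ⟨sub_mem (subset_span ⟨x.2, y.1, rfl⟩) (subset_span ⟨y.2, x.1, rfl⟩),
    add_mem (subset_span ⟨x.2, y.2, rfl⟩)
      (smul_mem _ _ (subset_span ⟨μ x.1, μ y.1, μ.map_lie x.1 y.1⟩))⟩

theorem deformedBracket_inr_inl (μ : h →ₗ⁅ℂ⁆ g) (t : ℂ) (x : g) (b : h) :
    deformedBracket μ t (inr ℂ h g x) (inl ℂ h g b) = inl ℂ h g ⁅x, b⁆ := by
  simp [deformedBracket]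

theorem deformedBracket_inr_inr (μ : h →ₗ⁅ℂ⁆ g) (t : ℂ) (x y : g) :
    deformedBracket μ t (inr ℂ h g x) (inr ℂ h g y) = inr ℂ h g ⁅x, y⁆ := by
  simp [deformedBracket]

end

section

variable {h g : Type*} [LieRing h] [LieAlgebra ℂ h] [LieRing g] [LieAlgebra ℂ g]
  [LieRingModule g h] [LieModule ℂ g h]

theorem derived_ideal_of_deformed_general (μ : h →ₗ⁅ℂ⁆ g)
    (t : ℂ) :
    Submodule.span ℂ {z : h × g | ∃ x y : h × g, z = deformedBracket μ t x y} =
      (Submodule.span ℂ {a : h | ∃ (x : g) (b : h), a = ⁅x, b⁆}).prod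
        (Submodule.span ℂ {c : g | ∃ x y : g, c = ⁅x, y⁆}) := by
  refine le_antisymm (span_le.2 ?_) ?_
  · rintro _ ⟨x, y, rfl⟩
    exact deformedBracket_mem_prod_span μ t x y
  · rw [← span_inl_union_inr]
    refine span_mono ?_
    rintro _ (⟨_, ⟨x, b, rfl⟩, rfl⟩ | ⟨_, ⟨x, y, rfl⟩, rfl⟩)
    · exact ⟨inr ℂ h g x, inl ℂ h g b, (deformedBracket_inr_inl μ t x b).symm⟩
    · exact ⟨inr ℂ h g x, inr ℂ h g y, (deformedBracket_inr_inr μ t x y).symm⟩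

/-- the derived ideal of the deformed Lie algebra `h ×^μ_t g`
(`t ≠ 0`) equals `O ⊕ [g,g]`, where `O ⊆ h` is the span of `{g·h}` and `[g,g]`
is the span of brackets of `g`. -/
theorem derived_ideal_of_deformed (μ : h →ₗ⁅ℂ⁆ g)
    (hder : ∀ (x : g) (a b : h), ⁅x, ⁅a, b⁆⁆ = ⁅⁅x, a⁆, b⁆ + ⁅a, ⁅x, b⁆⁆)
    (hcm1 : ∀ (x : g) (a : h), μ ⁅x, a⁆ = ⁅x, μ a⁆)
    (hcm2 : ∀ a b : h, ⁅μ a, b⁆ = ⁅a, b⁆)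
    (t : ℂ) (ht : t ≠ 0) :
    Submodule.span ℂ {z : h × g | ∃ x y : h × g, z = deformedBracket μ t x y} =
      (Submodule.span ℂ {a : h | ∃ (x : g) (b : h), a = ⁅x, b⁆}).prod
        (Submodule.span ℂ {c : g | ∃ x y : g, c = ⁅x, y⁆}) :=
  derived_ideal_of_deformed_general μ t

end
end

section
/- For a crossed module μ: h → g, the deformed Lie algebra h ×^μ_t g is solvable if and only if g is solvable. -/
/-!
The elements `(0, x)` bracket exactly as in `g`, so the derived series of the deformed algebra
contains that of `g`. Conversely, since `μ` is a `g`-equivariant Lie map, `z ↦ z.2` and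
`z ↦ μ z.1` both send the `n`-th derived term of the deformed algebra into `D^n g`. When
`D^k g = 0`, two elements of the `k`-th term have vanishing `g`-parts and `μ`-images, so their
bracket is `(0, t μ[a, b]) = (0, t [μ a, μ b]) = 0`.
-/

section

variable {h g : Type*} [LieRing h] [LieAlgebra ℂ h] [LieRing g] [LieAlgebra ℂ g]
  [LieRingModule g h] [LieModule ℂ g h]

/-- The derived series of the deformed Lie algebra `h ×^μ_t g`, as submodules. -/
def deformedDerivedSeries (μ : h →ₗ⁅ℂ⁆ g) (t : ℂ) : ℕ → Submodule ℂ (h × g)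
  | 0 => ⊤
  | n + 1 => Submodule.span ℂ
      {z : h × g | ∃ x ∈ deformedDerivedSeries μ t n, ∃ y ∈ deformedDerivedSeries μ t n,
        z = deformedBracket μ t x y}

theorem LieAlgebra.derivedSeries_succ_eq_lie {R L : Type*} [CommRing R] [LieRing L]
    [LieAlgebra R L] (k : ℕ) :
    derivedSeries R L (k + 1) = ⁅derivedSeries R L k, derivedSeries R L k⁆ := by
  simp only [derivedSeries_def, derivedSeriesOfIdeal_succ]

open LieAlgebra

section

omit [LieModule ℂ g h]

theorem deformedDerivedSeries_succ_le_iff (μ : h →ₗ⁅ℂ⁆ g) (t : ℂ) {n : ℕ}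
    {p : Submodule ℂ (h × g)} :
    deformedDerivedSeries μ t (n + 1) ≤ p ↔
      ∀ x ∈ deformedDerivedSeries μ t n, ∀ y ∈ deformedDerivedSeries μ t n,
        deformedBracket μ t x y ∈ p :=
  Submodule.span_le.trans
    ⟨fun hs x hx y hy ↦ hs ⟨x, hx, y, hy, rfl⟩,
      by rintro H _ ⟨x, hx, y, hy, rfl⟩; exact H x hx y hy⟩

theorem derivedSeries_le_comap_inr_deformedDerivedSeries (μ : h →ₗ⁅ℂ⁆ g) (t : ℂ)
    (n : ℕ) :
    (derivedSeries ℂ g n).toSubmodule ≤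
      (deformedDerivedSeries μ t n).comap (LinearMap.inr ℂ h g) := by
  induction n with
  | zero => simp [deformedDerivedSeries]
  | succ n ih =>
    rw [derivedSeries_succ_eq_lie, LieSubmodule.lieIdeal_oper_eq_linear_span', Submodule.span_le]
    rintro _ ⟨a, ha, b, hb, rfl⟩
    refine Submodule.subset_span ⟨(0, a), ih ha, (0, b), ih hb, ?_⟩
    simp [deformedBracket]

theorem deformedDerivedSeries_le_comap_derivedSeries (μ : h →ₗ⁅ℂ⁆ g) (t : ℂ)
    (hμ : ∀ (x : g) (a : h), μ ⁅x, a⁆ = ⁅x, μ a⁆) (n : ℕ) :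
    deformedDerivedSeries μ t n ≤
      (derivedSeries ℂ g n).toSubmodule.comap (LinearMap.snd ℂ h g) ⊓
        (derivedSeries ℂ g n).toSubmodule.comap
          ((μ : h →ₗ[ℂ] g) ∘ₗ LinearMap.fst ℂ h g) := by
  induction n with
  | zero => simp [deformedDerivedSeries]
  | succ n ih =>
    rw [deformedDerivedSeries_succ_le_iff]
    intro x hx y hy
    obtain ⟨hx₂, hx₁⟩ := ih hx
    obtain ⟨hy₂, hy₁⟩ := ih hy
    simp only [Submodule.mem_inf, Submodule.mem_comap, LinearMap.snd_apply, LinearMap.comp_apply,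
      LinearMap.fst_apply, LieHom.coe_toLinearMap, LieSubmodule.mem_toSubmodule]
      at hx₂ hx₁ hy₂ hy₁ ⊢
    simp only [derivedSeries_succ_eq_lie, deformedBracket, map_sub, hμ, LieHom.map_lie]
    exact ⟨add_mem (LieSubmodule.lie_mem_lie hx₂ hy₂)
        (Submodule.smul_mem _ t (LieSubmodule.lie_mem_lie hx₁ hy₁)),
      sub_mem (LieSubmodule.lie_mem_lie hx₂ hy₁) (LieSubmodule.lie_mem_lie hy₂ hx₁)⟩

end

theorem deformed_solvable_iff_general (μ : h →ₗ⁅ℂ⁆ g)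
    (hcm1 : ∀ (x : g) (a : h), μ ⁅x, a⁆ = ⁅x, μ a⁆)
    (t : ℂ) :
    (∃ n : ℕ, deformedDerivedSeries μ t n = ⊥) ↔ LieAlgebra.IsSolvable g := by
  rw [isSolvable_iff ℂ]
  constructor
  · rintro ⟨n, hn⟩
    refine ⟨n, (LieSubmodule.toSubmodule_eq_bot _).mp (eq_bot_iff.mpr ?_)⟩
    simpa [hn] using derivedSeries_le_comap_inr_deformedDerivedSeries μ t n
  · rintro ⟨k, hk⟩
    refine ⟨k + 1, eq_bot_iff.mpr ((deformedDerivedSeries_succ_le_iff μ t).mpr ?_)⟩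
    intro x hx y hy
    obtain ⟨hx₂, hx₁⟩ :=
      Submodule.mem_inf.mp (deformedDerivedSeries_le_comap_derivedSeries μ t hcm1 k hx)
    obtain ⟨hy₂, hy₁⟩ :=
      Submodule.mem_inf.mp (deformedDerivedSeries_le_comap_derivedSeries μ t hcm1 k hy)
    simp only [hk, Submodule.mem_comap, LinearMap.snd_apply, LinearMap.comp_apply,
      LinearMap.fst_apply, LieHom.coe_toLinearMap, LieSubmodule.mem_toSubmodule,
      LieSubmodule.mem_bot] at hx₂ hx₁ hy₂ hy₁
    simp [deformedBracket, hx₂, hx₁, hy₂, hy₁]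

/-- the deformed Lie algebra `h ×^μ_t g` is solvable (its derived
series terminates at zero) if and only if `g` is solvable. -/
theorem deformed_solvable_iff (μ : h →ₗ⁅ℂ⁆ g)
    [FiniteDimensional ℂ h] [FiniteDimensional ℂ g]
    (hder : ∀ (x : g) (a b : h), ⁅x, ⁅a, b⁆⁆ = ⁅⁅x, a⁆, b⁆ + ⁅a, ⁅x, b⁆⁆)
    (hcm1 : ∀ (x : g) (a : h), μ ⁅x, a⁆ = ⁅x, μ a⁆)
    (hcm2 : ∀ a b : h, ⁅μ a, b⁆ = ⁅a, b⁆)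
    (t : ℂ) (ht : t ≠ 0) :
    (∃ n : ℕ, deformedDerivedSeries μ t n = ⊥) ↔ LieAlgebra.IsSolvable g :=
  deformed_solvable_iff_general μ hcm1 t
end
end
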